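/- Let n ≥ 3 and for 1 ≤ k ≤ n−1 let v_k := i·diag(0,…,0,−1,0,…,0,1) ∈ su(n), the diagonal matrix with −i in position k and i in position n. Then Σ_{k=1}^{n−1} Σ_{X,Y ∈ B} σ(v_k, X, Y)·H(X,Y) = −2(n−2)(n−1)(n+2). -/

import Mathlib

open Matrix

/-- The square complex matrices of size `n`. -/
abbrev Mat (n : ℕ) := Matrix (Fin n) (Fin n) ℂ

/-- `T_k = (i/√(k(k+1)))·diag(1,…,1,−k,0,…,0)`, with `k` ones (positions `0,…,k−1` in
0-based indexing, i.e. positions `1,…,k` in the 1-based indexing of the paper) followed by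
`−k`. -/
noncomputable def Tmat (n k : ℕ) : Mat n :=
  (Complex.I / (Real.sqrt (k * (k + 1)) : ℂ)) •
    Matrix.diagonal (fun j : Fin n => if (j : ℕ) < k then 1 else if (j : ℕ) = k then -(k : ℂ) else 0)

/-- `E^r(k,l)`: the matrix with `(p,q)` entry `(1/√2)(δ_{kp}δ_{lq} − δ_{kq}δ_{lp})`. -/
noncomputable def Ermat (n : ℕ) (k l : Fin n) : Mat n :=
  ((Real.sqrt 2 : ℂ))⁻¹ • (Matrix.single k l 1 - Matrix.single l k 1)

/-- `E^c(k,l)`: the matrix with `(p,q)` entry `(i/√2)(δ_{kp}δ_{lq} + δ_{kq}δ_{lp})`. -/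
noncomputable def Ecmat (n : ℕ) (k l : Fin n) : Mat n :=
  (Complex.I / (Real.sqrt 2 : ℂ)) • (Matrix.single k l 1 + Matrix.single l k 1)

/-- The index set for the basis `B` of `su(n)`: `n−1` indices for the `T_k` and two copies
of the set of pairs `k < l` for the `E^r(k,l)` and `E^c(k,l)`. -/
abbrev BIdx (n : ℕ) :=
  Fin (n - 1) ⊕ ({p : Fin n × Fin n // p.1 < p.2} ⊕ {p : Fin n × Fin n // p.1 < p.2})

/-- The family `B = {T_1,…,T_{n−1}} ∪ {E^r(k,l)} ∪ {E^c(k,l)}`. -/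
noncomputable def bmat (n : ℕ) : BIdx n → Mat n
  | Sum.inl k => Tmat n (k + 1)
  | Sum.inr (Sum.inl p) => Ermat n p.1.1 p.1.2
  | Sum.inr (Sum.inr p) => Ecmat n p.1.1 p.1.2

/-- `η = i·diag(1,…,1,−(n−1))`. -/
noncomputable def eta (n : ℕ) : Mat n :=
  Complex.I • Matrix.diagonal (fun j : Fin n => if (j : ℕ) < n - 1 then 1 else -((n : ℂ) - 1))

/-- `H(X,Y) = i·tr(η(XY + YX))`, real-valued on `su(n)`. -/
noncomputable def Hform (n : ℕ) (X Y : Mat n) : ℂ :=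
  Complex.I * (eta n * (X * Y + Y * X)).trace

/-- `σ(X,Y,Z) = i(tr(XYZ) + tr(XZY))`, real-valued on `su(n)`. -/
noncomputable def sigmaC (n : ℕ) (X Y Z : Mat n) : ℂ :=
  Complex.I * ((X * Y * Z).trace + (X * Z * Y).trace)

/-- `v_k`: the diagonal matrix with `−i` in (1-based) position `k` and `i` in position
`n`, i.e. `i·diag(0,…,0,−1,0,…,0,1)`. -/
noncomputable def vmat (n k : ℕ) : Mat n :=
  Matrix.diagonal (fun j : Fin n =>
    if (j : ℕ) = k - 1 then -Complex.I else if (j : ℕ) = n - 1 then Complex.I else 0)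


/-!
The basis `B` is orthonormal for `⟨X, Y⟩ = -tr(XY)` and spans `sl(n)` over `ℂ`; equivalently
it satisfies the completeness relation
`∑ₐ (bₐ)_{pq} (bₐ)_{rs} = -δ_{ps}δ_{qr} + δ_{pq}δ_{rs}/n`.
Contracting with this relation turns every sum over `B` into traces. Since
`σ(v,X,Y) H(X,Y) = -tr(v{X,Y}) tr(η{X,Y})`, two contractions give
`∑_{X,Y} σ(v,X,Y) H(X,Y) = -(2n - 8/n) tr(vη) - (2 + 4/n²) tr v tr η` for every `v`,
and for `v = v_k` we have `tr v_k = 0`, `tr(v_k η) = n`: each `k` contributes `8 - 2n²`.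
-/

theorem sum_subtype_lt_add_swap {α M : Type*} [Fintype α] [LinearOrder α] [AddCommGroup M]
    (f : α → α → M) :
    ∑ x : {p : α × α // p.1 < p.2}, (f x.1.1 x.1.2 + f x.1.2 x.1.1) =
      ∑ k, ∑ l, f k l - ∑ k, f k k := by
  have hsplit : ∀ k l, f k l =
      ((if k < l then f k l else 0) + if l < k then f k l else 0) + if k = l then f k l else 0 := by
    intro k l
    rcases lt_trichotomy k l with h | rfl | h
    · simp [h, h.not_gt, h.ne]
    · simp
    · simp [h, h.not_gt, h.ne']
  have hswap :
      ∑ k, ∑ l, (if l < k then f k l else 0) = ∑ k, ∑ l, if k < l then f l k else 0 :=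
    Finset.sum_comm
  have hsub : ∑ x : {p : α × α // p.1 < p.2}, (f x.1.1 x.1.2 + f x.1.2 x.1.1) =
      ∑ k, ∑ l, if k < l then f k l + f l k else 0 := by
    rw [← Finset.sum_subtype {p : α × α | p.1 < p.2} (p := fun p : α × α => p.1 < p.2)
      (by simp) (fun p => f p.1 p.2 + f p.2 p.1), Finset.sum_filter, Fintype.sum_prod_type]
  rw [eq_sub_iff_add_eq, hsub]
  conv_rhs => rw [Finset.sum_congr rfl fun k _ => Finset.sum_congr rfl fun l _ => hsplit k l]
  simp only [Finset.sum_add_distrib, hswap, Finset.sum_ite_eq, Finset.mem_univ, if_true,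
    ite_add_zero]

section Trace

variable {m R : Type*} [Fintype m] [CommRing R]

theorem trace_mul_anticomm (u X Y : Matrix m m R) :
    (u * (X * Y + Y * X)).trace = ((u * X + X * u) * Y).trace := by
  rw [Matrix.mul_add, Matrix.add_mul, Matrix.trace_add, Matrix.trace_add, Matrix.mul_assoc,
    ← Matrix.trace_mul_cycle, Matrix.mul_assoc]

theorem trace_anticomm (u X : Matrix m m R) : (u * X + X * u).trace = 2 * (u * X).trace := by
  rw [Matrix.trace_add, Matrix.trace_mul_comm X]
  ring

theorem trace_anticomm_mul_anticomm (v w X : Matrix m m R) :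
    ((v * X + X * v) * (w * X + X * w)).trace =
      (v * X * w * X).trace + (w * X * v * X).trace + (w * v * (X * X)).trace
        + (v * w * (X * X)).trace := by
  have h1 : (v * X * (X * w)).trace = (w * v * (X * X)).trace := by
    simpa only [Matrix.mul_assoc] using Matrix.trace_mul_comm (v * X * X) w
  have h2 : (X * v * (w * X)).trace = (v * w * (X * X)).trace := by
    simpa only [Matrix.mul_assoc] using Matrix.trace_mul_comm X (v * w * X)
  have h3 : (X * v * (X * w)).trace = (w * X * v * X).trace := by
    simpa only [Matrix.mul_assoc] using Matrix.trace_mul_comm (X * v * X) w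
  rw [Matrix.add_mul, Matrix.mul_add, Matrix.mul_add, Matrix.trace_add, Matrix.trace_add,
    Matrix.trace_add, h1, h2, h3, ← Matrix.mul_assoc]
  ring

end Trace

/-- The completeness relation of an orthonormal basis of `su(n)` for `⟨X, Y⟩ = -tr(XY)`. -/
def IsSUComplete {ι : Type*} [Fintype ι] {n : ℕ} (b : ι → Mat n) : Prop :=
  ∀ p q r s : Fin n, ∑ a, b a p q * b a r s =
    -(if p = s ∧ q = r then 1 else 0) + if p = q ∧ r = s then (n : ℂ)⁻¹ else 0

namespace IsSUComplete

variable {ι : Type*} [Fintype ι] {n : ℕ} {b : ι → Mat n}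

theorem sum_mul_mul (hb : IsSUComplete b) (C : Mat n) :
    ∑ a, b a * C * b a = (-C.trace) • (1 : Mat n) + (n : ℂ)⁻¹ • C := by
  ext p s
  have hentry : (∑ a, b a * C * b a) p s = ∑ r, ∑ q, C q r * ∑ a, b a p q * b a r s := by
    simp only [Matrix.sum_apply, Matrix.mul_apply, Finset.sum_mul, Finset.mul_sum]
    rw [Finset.sum_comm]
    refine Finset.sum_congr rfl fun r _ => ?_
    rw [Finset.sum_comm]
    exact Finset.sum_congr rfl fun q _ => Finset.sum_congr rfl fun a _ => by ring
  rw [hentry]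
  simp only [hb p]
  simp [mul_add, ite_and, Finset.sum_add_distrib, Matrix.trace, Matrix.one_apply, eq_comm,
    mul_comm]

theorem sum_trace_mul_smul (hb : IsSUComplete b) (B : Mat n) :
    ∑ a, (B * b a).trace • b a = -B + (B.trace * (n : ℂ)⁻¹) • (1 : Mat n) := by
  ext p q
  have hentry :
      (∑ a, (B * b a).trace • b a) p q = ∑ r, ∑ s, B r s * ∑ a, b a s r * b a p q := by
    simp only [Matrix.sum_apply, Matrix.smul_apply, Matrix.trace, Matrix.diag_apply,
      Matrix.mul_apply, smul_eq_mul, Finset.sum_mul, Finset.mul_sum]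
    rw [Finset.sum_comm]
    refine Finset.sum_congr rfl fun r _ => ?_
    rw [Finset.sum_comm]
    exact Finset.sum_congr rfl fun s _ => Finset.sum_congr rfl fun a _ => by ring
  rw [hentry]
  simp only [hb _ _ p q]
  simp [mul_add, ite_and, Finset.sum_add_distrib, Matrix.trace, Matrix.one_apply, eq_comm,
    Finset.sum_mul]

theorem sum_mul_self (hb : IsSUComplete b) :
    ∑ a, b a * b a = ((n : ℂ)⁻¹ - n) • (1 : Mat n) := by
  simpa [sub_smul, neg_add_eq_sub] using hb.sum_mul_mul 1

theorem sum_trace_mul_mul_trace_mul (hb : IsSUComplete b) (A B : Mat n) :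
    ∑ a, (A * b a).trace * (B * b a).trace =
      -(A * B).trace + A.trace * B.trace * (n : ℂ)⁻¹ := by
  have h : ∀ a, (A * b a).trace * (B * b a).trace = (A * ((B * b a).trace • b a)).trace := by
    intro a
    rw [Matrix.mul_smul, Matrix.trace_smul, smul_eq_mul, mul_comm]
  rw [Finset.sum_congr rfl fun a _ => h a, ← Matrix.trace_sum, ← Matrix.mul_sum,
    hb.sum_trace_mul_smul]
  simp only [Matrix.mul_add, Matrix.mul_neg, Matrix.mul_smul, Matrix.mul_one, Matrix.trace_add,
    Matrix.trace_neg, Matrix.trace_smul, smul_eq_mul]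
  ring

theorem sum_trace_mul_mul_mul (hb : IsSUComplete b) (A B : Mat n) :
    ∑ a, (A * b a * B * b a).trace = -(A.trace * B.trace) + (A * B).trace * (n : ℂ)⁻¹ := by
  simp only [Matrix.mul_assoc A, ← Matrix.trace_sum, ← Matrix.mul_sum, hb.sum_mul_mul,
    Matrix.mul_add, Matrix.mul_smul, Matrix.mul_one, Matrix.trace_add, Matrix.trace_smul,
    smul_eq_mul]
  ring

theorem sum_sum_trace_anticomm_mul_trace_anticomm (hb : IsSUComplete b) (v w : Mat n) :
    ∑ i, ∑ j, (v * (b i * b j + b j * b i)).trace * (w * (b i * b j + b j * b i)).trace =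
      (2 * n - 8 * (n : ℂ)⁻¹) * (v * w).trace
        + (2 + 4 * (n : ℂ)⁻¹ ^ 2) * v.trace * w.trace := by
  have hinner : ∀ X : Mat n,
      ∑ j, (v * (X * b j + b j * X)).trace * (w * (X * b j + b j * X)).trace =
        -((v * X * w * X).trace + (w * X * v * X).trace + (w * v * (X * X)).trace
          + (v * w * (X * X)).trace) + 4 * (n : ℂ)⁻¹ * ((v * X).trace * (w * X).trace) := by
    intro X
    simp only [trace_mul_anticomm]
    rw [hb.sum_trace_mul_mul_trace_mul, trace_anticomm_mul_anticomm, trace_anticomm,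
      trace_anticomm]
    ring
  simp only [hinner, Finset.sum_add_distrib, Finset.sum_neg_distrib, ← Finset.mul_sum,
    hb.sum_trace_mul_mul_mul, hb.sum_trace_mul_mul_trace_mul, ← Matrix.trace_sum,
    hb.sum_mul_self, Matrix.mul_smul, Matrix.mul_one, Matrix.trace_smul, smul_eq_mul,
    Matrix.trace_mul_comm w v]
  ring

end IsSUComplete

def tmatDiag (k j : ℕ) : ℂ :=
  if j < k then 1 else if j = k then -(k : ℂ) else 0

theorem tmat_eq_smul_diagonal (n k : ℕ) :
    Tmat n k = (Complex.I / (√(k * (k + 1)) : ℂ)) • diagonal fun j : Fin n => tmatDiag k j :=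
  rfl

theorem tmatDiag_of_lt {k j : ℕ} (h : k < j) : tmatDiag k j = 0 := by
  simp [tmatDiag, h.not_gt, h.ne']

theorem tmatDiag_of_gt {k j : ℕ} (h : j < k) : tmatDiag k j = 1 := if_pos h

theorem sum_range_tmatDiag_mul_tmatDiag {N p r : ℕ} (hp : p ≤ N) (hr : r ≤ N) :
    ∑ m ∈ Finset.range N, tmatDiag (m + 1) p * tmatDiag (m + 1) r / ((m + 1) * (m + 2)) =
      (if p = r then 1 else 0) - 1 / (N + 1) := by
  induction N with
  | zero =>
    obtain rfl : p = 0 := by omega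
    obtain rfl : r = 0 := by omega
    simp
  | succ N ih =>
    have hN : (N : ℂ) + 1 ≠ 0 := by exact_mod_cast N.succ_ne_zero
    have hN2 : (N : ℂ) + 2 ≠ 0 := by exact_mod_cast (N + 1).succ_ne_zero
    rw [Finset.sum_range_succ, show ((N + 1 : ℕ) : ℂ) + 1 = N + 2 by push_cast; ring]
    by_cases hpr : p ≤ N ∧ r ≤ N
    · rw [ih hpr.1 hpr.2, tmatDiag_of_gt (Nat.lt_succ_of_le hpr.1),
        tmatDiag_of_gt (Nat.lt_succ_of_le hpr.2)]
      field_simp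
      ring
    · have hvanish : ∀ m < N, tmatDiag (m + 1) p * tmatDiag (m + 1) r = 0 := by
        intro m hm
        rcases not_and_or.mp hpr with h | h
        · rw [tmatDiag_of_lt (by omega : m + 1 < p), zero_mul]
        · rw [tmatDiag_of_lt (by omega : m + 1 < r), mul_zero]
      rw [Finset.sum_eq_zero fun m hm => by rw [hvanish m (Finset.mem_range.mp hm), zero_div]]
      have hlast : ∀ j ≤ N + 1,
          tmatDiag (N + 1) j = if j = N + 1 then -((N : ℂ) + 1) else 1 := by
        intro j hj
        rcases hj.lt_or_eq with hj | rfl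
        · rw [tmatDiag_of_gt hj, if_neg hj.ne]
        · simp [tmatDiag]
      rw [hlast p hp, hlast r hr]
      split_ifs <;> first | omega | (field_simp; ring)

theorem tmat_apply_mul_tmat_apply {n : ℕ} (m : ℕ) (p q r s : Fin n) :
    Tmat n (m + 1) p q * Tmat n (m + 1) r s =
      if p = q ∧ r = s then
        -(tmatDiag (m + 1) p * tmatDiag (m + 1) r / ((m + 1) * (m + 2)))
      else 0 := by
  have hsq : (Complex.I / (√(((m + 1 : ℕ) : ℝ) * ((m + 1 : ℕ) + 1)) : ℂ)) ^ 2 =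
      -1 / ((m + 1) * (m + 2)) := by
    rw [div_pow, Complex.I_sq, ← Complex.ofReal_pow, Real.sq_sqrt (by positivity)]
    push_cast
    ring
  simp only [tmat_eq_smul_diagonal, Matrix.smul_apply, diagonal_apply, smul_eq_mul]
  by_cases h : p = q ∧ r = s
  · obtain ⟨rfl, rfl⟩ := h
    simp only [if_true, and_self]
    linear_combination (tmatDiag (m + 1) p * tmatDiag (m + 1) r) * hsq
  · split_ifs <;> simp_all

theorem sum_tmat_mul_tmat {n : ℕ} (p q r s : Fin n) :
    ∑ k : Fin (n - 1), Tmat n (k + 1) p q * Tmat n (k + 1) r s =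
      if p = q ∧ r = s then (n : ℂ)⁻¹ - (if p = r then 1 else 0) else 0 := by
  simp only [tmat_apply_mul_tmat_apply]
  by_cases h : p = q ∧ r = s
  · simp only [if_pos h]
    rw [Fin.sum_univ_eq_sum_range
        (fun m => -(tmatDiag (m + 1) p * tmatDiag (m + 1) r / ((m + 1) * (m + 2)))),
      Finset.sum_neg_distrib, sum_range_tmatDiag_mul_tmatDiag (by omega) (by omega)]
    simp only [Nat.cast_pred p.pos, Fin.val_inj, sub_add_cancel]
    ring
  · simp only [if_neg h, Finset.sum_const_zero]

theorem ermat_mul_add_ecmat_mul {n : ℕ} (k l p q r s : Fin n) :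
    Ermat n k l p q * Ermat n k l r s + Ecmat n k l p q * Ecmat n k l r s =
      -(single k l (1 : ℂ) p q * single l k 1 r s
        + single l k (1 : ℂ) p q * single k l 1 r s) := by
  have hu : (((√2 : ℝ) : ℂ)⁻¹) ^ 2 = 1 / 2 := by
    rw [inv_pow, ← Complex.ofReal_pow, Real.sq_sqrt zero_le_two]; norm_num
  simp only [Ermat, Ecmat, Matrix.smul_apply, Matrix.sub_apply, Matrix.add_apply, smul_eq_mul,
    div_eq_mul_inv]
  set u := ((√2 : ℝ) : ℂ)⁻¹
  set A := single k l (1 : ℂ) p q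
  set B := single l k (1 : ℂ) p q
  set C := single k l (1 : ℂ) r s
  set D := single l k (1 : ℂ) r s
  linear_combination (-2 * (A * D + B * C)) * hu + (u ^ 2 * (A + B) * (C + D)) * Complex.I_sq

theorem sum_ermat_mul_add_ecmat_mul {n : ℕ} (p q r s : Fin n) :
    ∑ x : {p : Fin n × Fin n // p.1 < p.2},
      (Ermat n x.1.1 x.1.2 p q * Ermat n x.1.1 x.1.2 r s
        + Ecmat n x.1.1 x.1.2 p q * Ecmat n x.1.1 x.1.2 r s) =
      -(if p = s ∧ q = r then 1 else 0) + if p = q ∧ q = r ∧ r = s then 1 else 0 := by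
  simp only [ermat_mul_add_ecmat_mul, Finset.sum_neg_distrib,
    sum_subtype_lt_add_swap fun k l => single k l (1 : ℂ) p q * single l k 1 r s]
  simp only [single_apply, ite_and, mul_ite, ite_mul, one_mul, zero_mul, mul_zero,
    Finset.sum_ite_eq', Finset.mem_univ, if_true]
  split_ifs <;> grind

theorem isSUComplete_bmat (n : ℕ) : IsSUComplete (bmat n) := by
  intro p q r s
  rw [Fintype.sum_sum_type, Fintype.sum_sum_type, ← Finset.sum_add_distrib]
  simp only [bmat]
  rw [sum_tmat_mul_tmat, sum_ermat_mul_add_ecmat_mul]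
  split_ifs <;> grind

theorem trace_vmat_mul_diagonal {n k : ℕ} (hk : 1 ≤ k) (hkn : k < n) (d : Fin n → ℂ) :
    (vmat n k * diagonal d).trace =
      Complex.I * (d ⟨n - 1, by omega⟩ - d ⟨k - 1, by omega⟩) := by
  rw [vmat, diagonal_mul_diagonal, trace_diagonal,
    Fintype.sum_eq_add ⟨k - 1, by omega⟩ ⟨n - 1, by omega⟩ (by simp [Fin.ext_iff]; omega)]
  · simp [show n - 1 ≠ k - 1 by omega]
    ring
  · intro j hj
    simp only [ne_eq, Fin.ext_iff] at hj
    simp [hj]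

theorem trace_vmat {n k : ℕ} (hk : 1 ≤ k) (hkn : k < n) : (vmat n k).trace = 0 := by
  simpa using trace_vmat_mul_diagonal hk hkn 1

theorem trace_vmat_mul_eta {n k : ℕ} (hk : 1 ≤ k) (hkn : k < n) :
    (vmat n k * eta n).trace = n := by
  rw [eta, Matrix.mul_smul, Matrix.trace_smul, trace_vmat_mul_diagonal hk hkn, smul_eq_mul]
  simp only [lt_irrefl, if_false, show k - 1 < n - 1 by omega, if_true]
  linear_combination (-(n : ℂ)) * Complex.I_sq

theorem sigmaC_mul_Hform {n : ℕ} (v X Y : Mat n) :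
    sigmaC n v X Y * Hform n X Y =
      -((v * (X * Y + Y * X)).trace * (eta n * (X * Y + Y * X)).trace) := by
  rw [sigmaC, Hform, Matrix.mul_add v, Matrix.trace_add, ← Matrix.mul_assoc, ← Matrix.mul_assoc]
  linear_combination
    ((v * X * Y).trace + (v * Y * X).trace) * (eta n * (X * Y + Y * X)).trace * Complex.I_sq

theorem sigma_vk_H_contraction (n : ℕ) (hn : 3 ≤ n) :
    ∑ k ∈ Finset.Icc 1 (n - 1), ∑ i : BIdx n, ∑ j : BIdx n,
      sigmaC n (vmat n k) (bmat n i) (bmat n j) * Hform n (bmat n i) (bmat n j) =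
      -2 * ((n : ℂ) - 2) * ((n : ℂ) - 1) * ((n : ℂ) + 2) := by
  have hn0 : (n : ℂ) ≠ 0 := by exact_mod_cast (by omega : n ≠ 0)
  have hterm : ∀ k ∈ Finset.Icc 1 (n - 1), ∑ i : BIdx n, ∑ j : BIdx n,
      sigmaC n (vmat n k) (bmat n i) (bmat n j) * Hform n (bmat n i) (bmat n j) =
        8 - 2 * (n : ℂ) ^ 2 := by
    intro k hk
    obtain ⟨hk1, hkn⟩ : 1 ≤ k ∧ k < n := by rw [Finset.mem_Icc] at hk; omega
    simp only [sigmaC_mul_Hform, Finset.sum_neg_distrib,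
      (isSUComplete_bmat n).sum_sum_trace_anticomm_mul_trace_anticomm,
      trace_vmat_mul_eta hk1 hkn, trace_vmat hk1 hkn]
    field_simp
    ring
  rw [Finset.sum_congr rfl hterm, Finset.sum_const, Nat.card_Icc, nsmul_eq_mul,
    Nat.add_sub_cancel, Nat.cast_pred (by omega : 0 < n)]
  ring
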